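/- arXiv:1905.10118 — 2 statements merged into one kernel-verified Lean document; each statement's English description precedes it below -/
import Mathlib

section
/- The correspondence C : Ψ ⇉ R² defined by C(ψ) = {(Γ̃0,Γ̃1) : Γ̃0 ≥ (Σ0 + d0(ψ))Γ̃1, Γ̃0 ≤ [δ/α - (ν0-μ0)² - (ν1-μ1)² + Σ0 + Σ1 + d0(ψ) + d1(ψ)]Γ̃1 - 1, Γ̃1 ≤ 1/(Σ1 + d1(ψ))}, with ψ = (ν0, ν1, α), d0(ψ) = [(1-α)Σ0 + α(1-α)(μ0-ν0)²]/α and d1(ψ) = [(1-α)Σ1 + α(1-α)(μ1-ν1)²]/α, is upper-semicontinuous on Ψ = {(ν0,ν1,α) : α[(ν0-μ0)² + (ν1-μ1)²] ≤ δ, 0 < α < 1}. -/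
open Set

/-- `d0(ψ) = [(1-α)Σ0 + α(1-α)(μ0-ν0)²]/α`. -/
noncomputable def d0 (S0 μ0 ν0 α : ℝ) : ℝ :=
  ((1 - α) * S0 + α * (1 - α) * (μ0 - ν0) ^ 2) / α

/-- `d1(ψ) = [(1-α)Σ1 + α(1-α)(μ1-ν1)²]/α`. -/
noncomputable def d1 (S1 μ1 ν1 α : ℝ) : ℝ :=
  ((1 - α) * S1 + α * (1 - α) * (μ1 - ν1) ^ 2) / α

/-- The parameter set `Ψ = {(ν0,ν1,α) : α[(ν0-μ0)² + (ν1-μ1)²] ≤ δ, 0 < α < 1}`,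
with `ψ = (ν0, ν1, α)`. -/
def PsiSet (μ0 μ1 δ : ℝ) : Set (ℝ × ℝ × ℝ) :=
  {ψ | ψ.2.2 * ((ψ.1 - μ0) ^ 2 + (ψ.2.1 - μ1) ^ 2) ≤ δ ∧ 0 < ψ.2.2 ∧ ψ.2.2 < 1}

/-- The correspondence `C : Ψ ⇉ ℝ²` of the paper, with `ψ = (ν0, ν1, α)` and
`s = (Γ̃0, Γ̃1)`. -/
noncomputable def corr (S0 S1 δ μ0 μ1 : ℝ) (ψ : ℝ × ℝ × ℝ) : Set (ℝ × ℝ) :=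
  {s : ℝ × ℝ |
    (S0 + d0 S0 μ0 ψ.1 ψ.2.2) * s.2 ≤ s.1 ∧
    s.1 ≤ (δ / ψ.2.2 - (ψ.1 - μ0) ^ 2 - (ψ.2.1 - μ1) ^ 2 + S0 + S1
            + d0 S0 μ0 ψ.1 ψ.2.2 + d1 S1 μ1 ψ.2.1 ψ.2.2) * s.2 - 1 ∧
    s.2 ≤ 1 / (S1 + d1 S1 μ1 ψ.2.1 ψ.2.2)}

/-- Upper-semicontinuity of a correspondence (open-set definition). -/
def IsUSCCorrOn {X Y : Type*} [TopologicalSpace X] [TopologicalSpace Y]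
    (Ψ : Set X) (C : X → Set Y) : Prop :=
  ∀ ψ ∈ Ψ, ∀ V : Set Y, IsOpen V → C ψ ⊆ V →
    ∃ U : Set X, IsOpen U ∧ ψ ∈ U ∧ ∀ ψ' ∈ U ∩ Ψ, C ψ' ⊆ V

/-! On the open set `0 < α < 1` the three inequalities defining `C(ψ)` depend continuously
on `(ψ, Γ̃)`, so the graph of `C` is relatively closed there. For `ψ ∈ Ψ` with `α` bounded
away from `0`, the sets `C(ψ)` lie in one compact box: `Γ̃1 ≤ 1/Σ1`, and the first two
constraints force `Γ̃1 > 0` because `δ/α ≥ (ν0-μ0)² + (ν1-μ1)²` on `Ψ`. A relatively closed graph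
with locally uniform compact bounds is upper-semicontinuous by the tube lemma. -/

open Filter Topology

theorem isUSCCorrOn_of_isOpen_compl_graph {X Y : Type*} [TopologicalSpace X]
    [TopologicalSpace Y] {Ψ O : Set X} {C : X → Set Y} (hΨO : Ψ ⊆ O)
    (hgraph : IsOpen {p : X × Y | p.1 ∈ O ∧ p.2 ∉ C p.1})
    (hbdd : ∀ ψ ∈ Ψ, ∃ W ∈ 𝓝 ψ, ∃ K, IsCompact K ∧ ∀ x ∈ W ∩ Ψ, C x ⊆ K) :
    IsUSCCorrOn Ψ C := by
  intro ψ hψ V hV hCV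
  obtain ⟨W, hW, K, hK, hCK⟩ := hbdd ψ hψ
  obtain ⟨W', hW'W, hW'open, hψW'⟩ := mem_nhds_iff.1 hW
  have hslice : {ψ} ×ˢ (K \ V) ⊆ {p : X × Y | p.1 ∈ O ∧ p.2 ∉ C p.1} := by
    rintro ⟨x, s⟩ ⟨rfl, -, hsV⟩
    exact ⟨hΨO hψ, fun hs => hsV (hCV hs)⟩
  obtain ⟨u, v, hu, -, hψu, hKv, huv⟩ :=
    generalized_tube_lemma isCompact_singleton (hK.diff hV) hgraph hslice
  refine ⟨u ∩ W', hu.inter hW'open, ⟨hψu rfl, hψW'⟩, ?_⟩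
  rintro x ⟨⟨hxu, hxW'⟩, hxΨ⟩ s hs
  by_contra hsV
  have hsK : s ∈ K := hCK x ⟨hW'W hxW', hxΨ⟩ hs
  exact (huv (Set.mk_mem_prod hxu (hKv ⟨hsK, hsV⟩))).2 hs

theorem d1_eq_d0 : d1 = d0 := rfl

theorem d0_eq {S μ ν α : ℝ} (hα : α ≠ 0) : d0 S μ ν α = (1 - α) * (S / α + (ν - μ) ^ 2) := by
  unfold d0; field_simp; ring

theorem d0_nonneg {S μ ν α : ℝ} (hS : 0 ≤ S) (hα0 : 0 < α) (hα1 : α < 1) :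
    0 ≤ d0 S μ ν α := by
  rw [d0_eq hα0.ne']
  exact mul_nonneg (by linarith) (by positivity)

theorem d0_le {S μ ν α : ℝ} (hS : 0 ≤ S) (hα0 : 0 < α) :
    d0 S μ ν α ≤ S / α + (ν - μ) ^ 2 := by
  rw [d0_eq hα0.ne']
  have : 0 ≤ S / α + (ν - μ) ^ 2 := by positivity
  nlinarith

theorem continuousOn_d0 (S μ : ℝ) :
    ContinuousOn (fun q : ℝ × ℝ => d0 S μ q.1 q.2) {q | q.2 ≠ 0} := by
  unfold d0
  exact ContinuousOn.div (by fun_prop) (by fun_prop) fun q hq => hq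

noncomputable def corrSlack (S0 S1 δ μ0 μ1 : ℝ) (p : (ℝ × ℝ × ℝ) × ℝ × ℝ) : ℝ × ℝ × ℝ :=
  (p.2.1 - (S0 + d0 S0 μ0 p.1.1 p.1.2.2) * p.2.2,
   (δ / p.1.2.2 - (p.1.1 - μ0) ^ 2 - (p.1.2.1 - μ1) ^ 2 + S0 + S1
      + d0 S0 μ0 p.1.1 p.1.2.2 + d1 S1 μ1 p.1.2.1 p.1.2.2) * p.2.2 - 1 - p.2.1,
   1 / (S1 + d1 S1 μ1 p.1.2.1 p.1.2.2) - p.2.2)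

theorem mem_corr_iff_corrSlack_nonneg {S0 S1 δ μ0 μ1 : ℝ} {ψ : ℝ × ℝ × ℝ} {s : ℝ × ℝ} :
    s ∈ corr S0 S1 δ μ0 μ1 ψ ↔ 0 ≤ corrSlack S0 S1 δ μ0 μ1 (ψ, s) := by
  simp only [corr, corrSlack, Set.mem_ofPred_eq, Prod.le_def, Prod.fst_zero, Prod.snd_zero,
    le_sub_iff_add_le, zero_add]

theorem continuousOn_corrSlack (S0 S1 δ μ0 μ1 : ℝ) (hS1 : 0 < S1) :
    ContinuousOn (corrSlack S0 S1 δ μ0 μ1) {p | p.1.2.2 ∈ Set.Ioo 0 1} := by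
  have hd0 : ContinuousOn (fun p : (ℝ × ℝ × ℝ) × ℝ × ℝ => d0 S0 μ0 p.1.1 p.1.2.2)
      {p | p.1.2.2 ∈ Set.Ioo 0 1} :=
    (continuousOn_d0 S0 μ0).comp (f := fun p : (ℝ × ℝ × ℝ) × ℝ × ℝ => (p.1.1, p.1.2.2))
      (by fun_prop) fun p hp => hp.1.ne'
  have hd1 : ContinuousOn (fun p : (ℝ × ℝ × ℝ) × ℝ × ℝ => d1 S1 μ1 p.1.2.1 p.1.2.2)
      {p | p.1.2.2 ∈ Set.Ioo 0 1} :=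
    (continuousOn_d0 S1 μ1).comp (f := fun p : (ℝ × ℝ × ℝ) × ℝ × ℝ => (p.1.2.1, p.1.2.2))
      (by fun_prop) fun p hp => hp.1.ne'
  have hinv : ContinuousOn (fun p : (ℝ × ℝ × ℝ) × ℝ × ℝ => 1 / (S1 + d1 S1 μ1 p.1.2.1 p.1.2.2))
      {p | p.1.2.2 ∈ Set.Ioo 0 1} :=
    continuousOn_const.div (continuousOn_const.add hd1)
      fun p hp => (add_pos_of_pos_of_nonneg hS1 (d0_nonneg hS1.le hp.1 hp.2)).ne'
  have hδ : ContinuousOn (fun p : (ℝ × ℝ × ℝ) × ℝ × ℝ => δ / p.1.2.2)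
      {p | p.1.2.2 ∈ Set.Ioo 0 1} :=
    continuousOn_const.div (by fun_prop) fun p hp => hp.1.ne'
  unfold corrSlack
  fun_prop

theorem isOpen_compl_graph_corr (S0 S1 δ μ0 μ1 : ℝ) (hS1 : 0 < S1) :
    IsOpen {p : (ℝ × ℝ × ℝ) × ℝ × ℝ |
      p.1 ∈ {q : ℝ × ℝ × ℝ | q.2.2 ∈ Set.Ioo 0 1} ∧ p.2 ∉ corr S0 S1 δ μ0 μ1 p.1} := by
  have hO : IsOpen {p : (ℝ × ℝ × ℝ) × ℝ × ℝ | p.1.2.2 ∈ Set.Ioo 0 1} :=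
    isOpen_Ioo.preimage (by fun_prop)
  convert (continuousOn_corrSlack S0 S1 δ μ0 μ1 hS1).isOpen_inter_preimage hO
    isClosed_Ici.isOpen_compl using 1
  ext p
  exact and_congr_right' mem_corr_iff_corrSlack_nonneg.not

theorem corr_subset_Icc_prod {S0 S1 δ μ0 μ1 a : ℝ} {ψ : ℝ × ℝ × ℝ} (hS0 : 0 < S0) (hS1 : 0 < S1)
    (hψ : ψ ∈ PsiSet μ0 μ1 δ) (ha : 0 < a) (haψ : a ≤ ψ.2.2) :
    corr S0 S1 δ μ0 μ1 ψ ⊆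
      Set.Icc 0 (((δ + S0 + S1) / a + S0 + S1) / S1) ×ˢ Set.Icc 0 (1 / S1) := by
  obtain ⟨ν0, ν1, α⟩ := ψ
  obtain ⟨hδ, hα0, hα1⟩ := hψ
  rintro ⟨x, y⟩ ⟨hx0, hx1, hy1⟩
  dsimp only at *
  rw [d1_eq_d0] at hx1 hy1
  have hd0 := d0_nonneg (μ := μ0) (ν := ν0) hS0.le hα0 hα1
  have hd1 := d0_nonneg (μ := μ1) (ν := ν1) hS1.le hα0 hα1
  have hsq : (ν0 - μ0) ^ 2 + (ν1 - μ1) ^ 2 ≤ δ / α := by rw [le_div_iff₀ hα0]; linarith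
  have hδ0 : 0 ≤ δ := le_trans (by positivity) hδ
  have hy0 : 0 < y := by
    have hc : 0 ≤ δ / α - (ν0 - μ0) ^ 2 - (ν1 - μ1) ^ 2 + S1 + d0 S1 μ1 ν1 α := by linarith
    exact pos_of_mul_pos_right (by linarith) hc
  have hB : δ / α - (ν0 - μ0) ^ 2 - (ν1 - μ1) ^ 2 + S0 + S1 + d0 S0 μ0 ν0 α + d0 S1 μ1 ν1 α
      ≤ (δ + S0 + S1) / a + S0 + S1 := by
    have hα : (δ + S0 + S1) / α ≤ (δ + S0 + S1) / a := by gcongr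
    have hd0le := d0_le (μ := μ0) (ν := ν0) hS0.le hα0
    have hd1le := d0_le (μ := μ1) (ν := ν1) hS1.le hα0
    rw [add_div, add_div] at hα
    linarith
  have hy : y ≤ 1 / S1 := hy1.trans (one_div_le_one_div_of_le hS1 (by linarith))
  refine ⟨⟨le_trans (by positivity) hx0, ?_⟩, hy0.le, hy⟩
  calc x ≤ ((δ + S0 + S1) / a + S0 + S1) * y := by
        linarith [mul_le_mul_of_nonneg_right hB hy0.le]
    _ ≤ ((δ + S0 + S1) / a + S0 + S1) * (1 / S1) := by gcongr
    _ = ((δ + S0 + S1) / a + S0 + S1) / S1 := mul_one_div _ _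

theorem stmt_8_general (S0 S1 δ μ0 μ1 : ℝ) (hS0 : 0 < S0) (hS1 : 0 < S1) :
    IsUSCCorrOn (PsiSet μ0 μ1 δ) (corr S0 S1 δ μ0 μ1) := by
  refine isUSCCorrOn_of_isOpen_compl_graph (fun ψ hψ => hψ.2)
    (isOpen_compl_graph_corr S0 S1 δ μ0 μ1 hS1) fun ψ hψ => ?_
  refine ⟨{q | ψ.2.2 / 2 < q.2.2}, ?_, _, isCompact_Icc.prod isCompact_Icc,
    fun q hq => corr_subset_Icc_prod hS0 hS1 hq.2 (half_pos hψ.2.1) hq.1.le⟩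
  exact (isOpen_lt continuous_const (by fun_prop)).mem_nhds (half_lt_self hψ.2.1)

/-- The correspondence `C` of the paper is upper-semicontinuous on `Ψ`. -/
theorem stmt_8 (S0 S1 δ μ0 μ1 : ℝ) (hS0 : 0 < S0) (hS1 : 0 < S1) (hδ : 0 < δ) :
    IsUSCCorrOn (PsiSet μ0 μ1 δ) (corr S0 S1 δ μ0 μ1) :=
  stmt_8_general S0 S1 δ μ0 μ1 hS0 hS1
end

section
/- The correspondence C defined in the paper (same C, d0, d1, Ψ as above) is lower-semicontinuous on Ψ: for every ψ ∈ Ψ and every open V with V ∩ C(ψ) ≠ ∅, there is a neighborhood U of ψ such that V ∩ C(ψ') ≠ ∅ for all ψ' ∈ U ∩ Ψ. -/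
open Set

/-!
`C(ψ)` is the set `{(x, t) | a t ≤ x ≤ b t - 1, t ≤ 1/c}` with coefficients `a, b, c` depending
continuously on `ψ`, and on `Ψ` they satisfy `0 < c ≤ b - a`. Under that condition the map that
first clamps `t` into `[1/(b-a), 1/c]` and then `x` into `[a t, b t - 1]` is a retraction of the
plane onto `C(ψ)`, jointly continuous in `ψ`. Retracting a fixed point `s ∈ V ∩ C(ψ)` onto `C(ψ')`
gives a continuous selection of `C` through `s`, whence lower semicontinuity.
-/

theorem exists_isOpen_forall_inter_nonempty_of_selection {X Y : Type*} [TopologicalSpace X]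
    [TopologicalSpace Y] {C : X → Set Y} {Ψ : Set X} {ψ : X} {V : Set Y} (hV : IsOpen V)
    {f : X → Y} (hf : ContinuousAt f ψ) (hfψ : f ψ ∈ V) (hfC : ∀ p ∈ Ψ, f p ∈ C p) :
    ∃ U : Set X, IsOpen U ∧ ψ ∈ U ∧ ∀ p ∈ U ∩ Ψ, (V ∩ C p).Nonempty := by
  obtain ⟨U, hUV, hU, hψU⟩ := mem_nhds_iff.mp (hf.preimage_mem_nhds (hV.mem_nhds hfψ))
  exact ⟨U, hU, hψU, fun p hp => ⟨f p, hUV hp.1, hfC p hp.2⟩⟩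

def band (a b c : ℝ) : Set (ℝ × ℝ) :=
  {s | a * s.2 ≤ s.1 ∧ s.1 ≤ b * s.2 - 1 ∧ s.2 ≤ 1 / c}

noncomputable def bandRetract (a b c : ℝ) (s : ℝ × ℝ) : ℝ × ℝ :=
  let t := max (1 / (b - a)) (min s.2 (1 / c))
  (max (a * t) (min s.1 (b * t - 1)), t)

theorem bandRetract_mem_band {a b c : ℝ} (hc : 0 < c) (hcba : c ≤ b - a) (s : ℝ × ℝ) :
    bandRetract a b c s ∈ band a b c := by
  simp only [band, bandRetract, mem_ofPred_eq]
  set t := max (1 / (b - a)) (min s.2 (1 / c))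
  have ht_ge : 1 / (b - a) ≤ t := le_max_left _ _
  have ht_le : t ≤ 1 / c := max_le (one_div_le_one_div_of_le hc hcba) (min_le_right _ _)
  have hslack : 1 ≤ (b - a) * t := by
    rwa [div_le_iff₀' (hc.trans_le hcba)] at ht_ge
  exact ⟨le_max_left _ _, max_le (by linarith) (min_le_right _ _), ht_le⟩

theorem bandRetract_eq_self {a b c : ℝ} (hab : a < b) {s : ℝ × ℝ} (hs : s ∈ band a b c) :
    bandRetract a b c s = s := by
  obtain ⟨hlow, hup, hcap⟩ := hs
  have ht : 1 / (b - a) ≤ s.2 := by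
    rw [div_le_iff₀' (sub_pos.mpr hab)]
    linarith
  simp only [bandRetract, min_eq_left hcap, max_eq_right ht, min_eq_left hup, max_eq_right hlow]

theorem ContinuousAt.bandRetract {X : Type*} [TopologicalSpace X] {a b c : X → ℝ} {x : X}
    (ha : ContinuousAt a x) (hb : ContinuousAt b x) (hc : ContinuousAt c x)
    (hab : b x - a x ≠ 0) (hc0 : c x ≠ 0) (s : ℝ × ℝ) :
    ContinuousAt (fun p => bandRetract (a p) (b p) (c p) s) x := by
  unfold _root_.bandRetract
  fun_prop (disch := assumption)

section

variable (S0 S1 δ μ0 μ1 : ℝ)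

noncomputable def lowerSlope (ψ : ℝ × ℝ × ℝ) : ℝ := S0 + d0 S0 μ0 ψ.1 ψ.2.2

noncomputable def upperSlope (ψ : ℝ × ℝ × ℝ) : ℝ :=
  δ / ψ.2.2 - (ψ.1 - μ0) ^ 2 - (ψ.2.1 - μ1) ^ 2 + S0 + S1
    + d0 S0 μ0 ψ.1 ψ.2.2 + d1 S1 μ1 ψ.2.1 ψ.2.2

noncomputable def capDenom (ψ : ℝ × ℝ × ℝ) : ℝ := S1 + d1 S1 μ1 ψ.2.1 ψ.2.2

section Continuity

variable {ψ : ℝ × ℝ × ℝ} (hα : ψ.2.2 ≠ 0)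
include hα

theorem continuousAt_lowerSlope : ContinuousAt (lowerSlope S0 μ0) ψ := by
  unfold lowerSlope d0
  fun_prop (disch := assumption)

theorem continuousAt_upperSlope : ContinuousAt (upperSlope S0 S1 δ μ0 μ1) ψ := by
  unfold upperSlope d0 d1
  fun_prop (disch := assumption)

theorem continuousAt_capDenom : ContinuousAt (capDenom S1 μ1) ψ := by
  unfold capDenom d1
  fun_prop (disch := assumption)

end Continuity

theorem corr_eq_band (ψ : ℝ × ℝ × ℝ) :
    corr S0 S1 δ μ0 μ1 ψ =
      band (lowerSlope S0 μ0 ψ) (upperSlope S0 S1 δ μ0 μ1 ψ) (capDenom S1 μ1 ψ) :=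
  rfl

variable {S0 S1 δ μ0 μ1}

theorem d1_nonneg (hS1 : 0 ≤ S1) {ν1 α : ℝ} (hα0 : 0 < α) (hα1 : α < 1) :
    0 ≤ d1 S1 μ1 ν1 α := by
  unfold d1
  have : 0 ≤ 1 - α := by linarith
  positivity

theorem capDenom_pos (hS1 : 0 < S1) {ψ : ℝ × ℝ × ℝ} (hψ : ψ ∈ PsiSet μ0 μ1 δ) :
    0 < capDenom S1 μ1 ψ :=
  add_pos_of_pos_of_nonneg hS1 (d1_nonneg hS1.le hψ.2.1 hψ.2.2)

theorem capDenom_le_upperSlope_sub_lowerSlope {ψ : ℝ × ℝ × ℝ} (hψ : ψ ∈ PsiSet μ0 μ1 δ) :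
    capDenom S1 μ1 ψ ≤ upperSlope S0 S1 δ μ0 μ1 ψ - lowerSlope S0 μ0 ψ := by
  obtain ⟨hr, hα0, -⟩ := hψ
  have : (ψ.1 - μ0) ^ 2 + (ψ.2.1 - μ1) ^ 2 ≤ δ / ψ.2.2 := (le_div_iff₀' hα0).mpr hr
  simp only [capDenom, upperSlope, lowerSlope]
  linarith

theorem lowerSlope_lt_upperSlope (hS1 : 0 < S1) {ψ : ℝ × ℝ × ℝ} (hψ : ψ ∈ PsiSet μ0 μ1 δ) :
    lowerSlope S0 μ0 ψ < upperSlope S0 S1 δ μ0 μ1 ψ :=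
  sub_pos.mp ((capDenom_pos hS1 hψ).trans_le (capDenom_le_upperSlope_sub_lowerSlope hψ))

end

theorem stmt_9_general (S0 S1 δ μ0 μ1 : ℝ) (hS1 : 0 < S1) :
    ∀ ψ ∈ PsiSet μ0 μ1 δ, ∀ V : Set (ℝ × ℝ), IsOpen V →
      (V ∩ corr S0 S1 δ μ0 μ1 ψ).Nonempty →
      ∃ U : Set (ℝ × ℝ × ℝ), IsOpen U ∧ ψ ∈ U ∧
        ∀ ψ' ∈ U ∩ PsiSet μ0 μ1 δ, (V ∩ corr S0 S1 δ μ0 μ1 ψ').Nonempty := by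
  intro ψ hψ V hV ⟨s, hsV, hsC⟩
  rw [corr_eq_band] at hsC
  have hα : ψ.2.2 ≠ 0 := hψ.2.1.ne'
  have hgap : lowerSlope S0 μ0 ψ < upperSlope S0 S1 δ μ0 μ1 ψ := lowerSlope_lt_upperSlope hS1 hψ
  refine exists_isOpen_forall_inter_nonempty_of_selection hV
    ((continuousAt_lowerSlope S0 μ0 hα).bandRetract (continuousAt_upperSlope S0 S1 δ μ0 μ1 hα)
      (continuousAt_capDenom S1 μ1 hα) (sub_pos.mpr hgap).ne' (capDenom_pos hS1 hψ).ne' s)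
    ?_ fun p hp => ?_
  · rwa [bandRetract_eq_self hgap hsC]
  · rw [corr_eq_band]
    exact bandRetract_mem_band (capDenom_pos hS1 hp) (capDenom_le_upperSlope_sub_lowerSlope hp) s

/-- The correspondence `C` of the paper is lower-semicontinuous on `Ψ`: for every
`ψ ∈ Ψ` and every open `V` with `V ∩ C(ψ) ≠ ∅`, there is a neighborhood `U` of `ψ`
such that `V ∩ C(ψ') ≠ ∅` for all `ψ' ∈ U ∩ Ψ`. -/
theorem stmt_9 (S0 S1 δ μ0 μ1 : ℝ) (hS0 : 0 < S0) (hS1 : 0 < S1) (hδ : 0 < δ) :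
    ∀ ψ ∈ PsiSet μ0 μ1 δ, ∀ V : Set (ℝ × ℝ), IsOpen V →
      (V ∩ corr S0 S1 δ μ0 μ1 ψ).Nonempty →
      ∃ U : Set (ℝ × ℝ × ℝ), IsOpen U ∧ ψ ∈ U ∧
        ∀ ψ' ∈ U ∩ PsiSet μ0 μ1 δ, (V ∩ corr S0 S1 δ μ0 μ1 ψ').Nonempty :=
  stmt_9_general S0 S1 δ μ0 μ1 hS1
end
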